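/- Let T ≥ 1 be a natural number, v ∈ [0,1], M_v > 0, and set ε := T^{−(1+v)/2} and γ := M_v^{2/(1+v)}·T^{(1−v)/2}. Let d : ℝ^p → ℝ be a differentiable 1-strongly convex function with Bregman distance ξ, with x_0 a minimizer of d, let h : ℝ^p → ℝ be convex, and for each t = 0,…,T let g_t : ℝ^p → ℝ be convex and differentiable with Hölder continuous gradient of exponent v and constant at most M_v. Define φ_0(x) := ξ(x_0, x) and φ_{t+1}(x) := φ_t(x) + (1/(2γ))·[g_t(x_t) + ⟨∇g_t(x_t), x − x_t⟩ + h(x)], let x_{t+1} be a minimizer of φ_{t+1}, and let y_t be a minimizer over x of g_t(x_t) + ⟨∇g_t(x_t), x − x_t⟩ + 2γ·ξ(x_t, x) + h(x). Then for every x* ∈ ℝ^p, ∑_{t=0}^{T} [(g_t(y_t) + h(y_t)) − (g_t(x*) + h(x*))] ≤ (1/2)·T^{−(1+v)/2}·(T+1) + 2·ξ(x_0, x*)·M_v^{2/(1+v)}·T^{(1−v)/2}; in particular the regret is O(T^{(1−v)/2}). -/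

import Mathlib

/-!
Dual averaging with a Bregman regularizer. Since `φ_t - d` is convex and `x_t` minimizes `φ_t`,
`φ_t(x_t) + ξ(x_t, z) ≤ φ_t(z)` for every `z`; taking `z = x_{t+1}` and comparing with the prox
point `y_t` shows that each step raises `φ_t(x_t)` by at least `(g_t(y_t) + h(y_t) - ε/2)/(2γ)`.
Here the Hölder continuity of `∇g_t` enters through the inexact quadratic bound
`g(z) ≤ g(x) + ⟪∇g(x), z - x⟫ + γ‖z - x‖² + ε/2`, valid for `γ = γ(M_v, ε)`. Telescoping and
comparing `φ_{T+1}(x_{T+1}) ≤ φ_{T+1}(x*)`, where the linearizations underestimate the convex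
`g_t`, gives the regret bound `(T+1)ε/2 + 2γ ξ(x_0, x*)`.
-/

open scoped InnerProductSpace
open Set Finset AffineMap

section Ftrl

variable {α : Type*} {φ ℓ f : ℕ → α → ℝ} {D : α → α → ℝ} {x : ℕ → α} {a : ℕ → ℝ} {κ δ : ℝ}
  {n : ℕ}

theorem sum_sub_le_of_ftrl (hκ : 0 < κ) (hφ : ∀ t < n, ∀ z, φ (t + 1) z = φ t z + 1 / κ * ℓ t z)
    (hprox : ∀ t < n, ∀ z, φ t (x t) + D (x t) z ≤ φ t z)
    (ha : ∀ t < n, a t ≤ ℓ t (x (t + 1)) + κ * D (x t) (x (t + 1)) + δ)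
    {z : α} (hℓ : ∀ t < n, ℓ t z ≤ f t z) (hmin : φ n (x n) ≤ φ n z) :
    ∑ t ∈ range n, (a t - f t z) ≤ n * δ + κ * (φ 0 z - φ 0 (x 0)) := by
  have hκinv : ∀ w, κ * (1 / κ * w) = w := fun w => by field_simp
  have hstep : ∀ t ∈ range n, a t - f t z
      ≤ δ + κ * ((φ (t + 1) (x (t + 1)) - φ t (x t)) - (φ (t + 1) z - φ t z)) := by
    intro t ht
    rw [Finset.mem_range] at ht
    rw [hφ t ht, hφ t ht]
    linarith [mul_le_mul_of_nonneg_left (hprox t ht (x (t + 1))) hκ.le, ha t ht, hℓ t ht,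
      hκinv (ℓ t (x (t + 1))), hκinv (ℓ t z)]
  calc ∑ t ∈ range n, (a t - f t z)
      ≤ ∑ t ∈ range n, (δ + κ * ((φ (t + 1) (x (t + 1)) - φ t (x t)) - (φ (t + 1) z - φ t z))) :=
        sum_le_sum hstep
    _ = n * δ + κ * ((φ n (x n) - φ 0 (x 0)) - (φ n z - φ 0 z)) := by
        rw [sum_add_distrib, sum_const, card_range, nsmul_eq_mul, ← mul_sum, sum_sub_distrib,
          sum_range_sub (fun t => φ t (x t)), sum_range_sub (fun t => φ t z)]
    _ ≤ n * δ + κ * (φ 0 z - φ 0 (x 0)) := by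
        gcongr _ + κ * ?_
        linarith

end Ftrl

noncomputable def holderStep (M v ε : ℝ) : ℝ := (1 / ε) ^ ((1 - v) / (1 + v)) * M ^ (2 / (1 + v))

theorem rpow_le_sq_add_half {ρ q : ℝ} (hρ : 0 ≤ ρ) (hq1 : 1 ≤ q) (hq2 : q ≤ 2) :
    ρ ^ q ≤ ρ ^ 2 + 1 / 2 := by
  rcases le_total ρ 1 with hρ1 | hρ1
  · have := Real.rpow_le_rpow_of_exponent_ge' hρ hρ1 zero_le_one hq1
    rw [Real.rpow_one] at this
    nlinarith [sq_nonneg (ρ - 1 / 2)]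
  · have := Real.rpow_le_rpow_of_exponent_le hρ1 hq2
    rw [Real.rpow_two] at this
    linarith

theorem holderStep_mul_sq {M v ε : ℝ} (hM : 0 < M) (hε : 0 < ε) (hv : 0 ≤ v) :
    holderStep M v ε * ((ε / M) ^ (1 + v)⁻¹) ^ 2 = ε := by
  have h1v : (1 + v) ≠ 0 := by positivity
  rw [holderStep, ← Real.rpow_natCast, ← Real.rpow_mul (by positivity), mul_assoc,
    show (1 + v)⁻¹ * ((2 : ℕ) : ℝ) = 2 / (1 + v) by push_cast; ring,
    ← Real.mul_rpow hM.le (by positivity), mul_div_cancel₀ _ hM.ne', one_div, Real.inv_rpow hε.le,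
    ← Real.rpow_neg hε.le, ← Real.rpow_add hε]
  convert Real.rpow_one ε using 2
  field_simp
  ring

theorem mul_rpow_le_holderStep_mul_sq_add {M v ε r : ℝ} (hM : 0 < M) (hε : 0 < ε) (hv0 : 0 ≤ v)
    (hv1 : v ≤ 1) (hr : 0 ≤ r) : M * r ^ (1 + v) ≤ holderStep M v ε * r ^ 2 + ε / 2 := by
  -- with `r = a ρ`, where `M a ^ (1 + v) = ε = holderStep M v ε * a ^ 2`, this is
  -- `rpow_le_sq_add_half`
  set a := (ε / M) ^ (1 + v)⁻¹
  have ha : 0 < a := by positivity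
  have ha_rpow : a ^ (1 + v) = ε / M := Real.rpow_inv_rpow (by positivity) (by positivity)
  obtain ⟨ρ, hρ, rfl⟩ : ∃ ρ, 0 ≤ ρ ∧ r = a * ρ := ⟨r / a, by positivity, by field_simp⟩
  calc M * (a * ρ) ^ (1 + v) = ε * ρ ^ (1 + v) := by
        rw [Real.mul_rpow ha.le hρ, ha_rpow]; field_simp
    _ ≤ ε * (ρ ^ 2 + 1 / 2) := by
        gcongr; exact rpow_le_sq_add_half hρ (by linarith) (by linarith)
    _ = holderStep M v ε * (a * ρ) ^ 2 + ε / 2 := by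
        rw [mul_pow, ← mul_assoc, holderStep_mul_sq hM hε hv0]; ring

theorem holderStep_rpow_neg {M v T : ℝ} (hT : 0 < T) (hv : 0 ≤ v) :
    holderStep M v (T ^ (-(1 + v) / 2)) = M ^ (2 / (1 + v)) * T ^ ((1 - v) / 2) := by
  have h1v : (1 + v) ≠ 0 := by positivity
  rw [holderStep, mul_comm, one_div, ← Real.rpow_neg hT.le, ← Real.rpow_mul hT.le]
  congr 2
  field_simp

section Convex

variable {E : Type*} [NormedAddCommGroup E] [InnerProductSpace ℝ E]

theorem convexOn_const_add_inner_sub (c : ℝ) (w u : E) :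
    ConvexOn ℝ univ fun z => c + ⟪w, z - u⟫_ℝ := by
  refine (((innerₛₗ ℝ w).convexOn convex_univ).add_const (c - ⟪w, u⟫_ℝ)).congr fun z _ => ?_
  simp only [Pi.add_apply, innerₛₗ_apply_apply, inner_sub_right]
  ring

theorem convexOn_sub_of_forall_eq_add {φ : ℕ → E → ℝ} {d h : E → ℝ} {c : ℕ → ℝ} {w u : ℕ → E}
    {β : ℝ} {n : ℕ} (hβ : 0 ≤ β) (hh : ConvexOn ℝ univ h)
    (h0 : ConvexOn ℝ univ fun z => φ 0 z - d z)
    (hsucc : ∀ t < n, ∀ z, φ (t + 1) z = φ t z + β * (c t + ⟪w t, z - u t⟫_ℝ + h z)) :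
    ConvexOn ℝ univ fun z => φ n z - d z := by
  induction n with
  | zero => exact h0
  | succ n ih =>
    refine ((ih fun t ht => hsucc t (by omega)).add
      (((convexOn_const_add_inner_sub (c n) (w n) (u n)).add hh).smul hβ)).congr fun z _ => ?_
    simp only [Pi.add_apply, smul_eq_mul, hsucc n n.lt_succ_self z]
    ring

end Convex

section Gradient

variable {E : Type*} [NormedAddCommGroup E] [InnerProductSpace ℝ E] [CompleteSpace E]

theorem hasDerivAt_comp_lineMap {f : E → ℝ} {x z : E} {s : ℝ}
    (hf : DifferentiableAt ℝ f (lineMap x z s)) :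
    HasDerivAt (fun r => f (lineMap x z r)) ⟪gradient f (lineMap x z s), z - x⟫_ℝ s := by
  have := hf.hasGradientAt.hasFDerivAt.comp_hasDerivAt s hasDerivAt_lineMap
  rwa [InnerProductSpace.toDual_apply_apply] at this

theorem ConvexOn.add_inner_gradient_le {f : E → ℝ} (hf : ConvexOn ℝ univ f) {x : E}
    (hfx : DifferentiableAt ℝ f x) (z : E) : f x + ⟪gradient f x, z - x⟫_ℝ ≤ f z := by
  have hline : ConvexOn ℝ univ (fun r : ℝ => f (lineMap x z r)) :=
    hf.comp_affineMap (lineMap x z)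
  have := hline.le_slope_of_hasDerivAt (mem_univ 0) (mem_univ 1) zero_lt_one
    (hasDerivAt_comp_lineMap (by simpa using hfx))
  simp only [slope_def_field, lineMap_apply_zero, lineMap_apply_one, sub_zero, div_one] at this
  linarith

theorem IsMinOn.nonneg_of_hasDerivAt {ψ : ℝ → ℝ} {ψ' : ℝ} (hmin : IsMinOn ψ (Icc 0 1) 0)
    (hψ : HasDerivAt ψ ψ' 0) : 0 ≤ ψ' := by
  have hcone : (1 : ℝ) ∈ posTangentConeAt (Icc (0 : ℝ) 1) 0 :=
    mem_posTangentConeAt_of_segment_subset (by simp [segment_eq_Icc])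
  simpa using hmin.localize.hasFDerivWithinAt_nonneg hψ.hasFDerivAt.hasFDerivWithinAt hcone

theorem add_bregman_le_of_isMinOn {φ d : E → ℝ} (hc : ConvexOn ℝ univ fun z => φ z - d z)
    {x : E} (hd : DifferentiableAt ℝ d x) (hmin : ∀ z, φ x ≤ φ z) (z : E) :
    φ x + (d z - d x - ⟪gradient d x, z - x⟫_ℝ) ≤ φ z := by
  -- on `[x, z]`, replacing the convex `φ - d` by its chord keeps `x` a minimizer
  have hline : IsMinOn (fun r : ℝ => d (lineMap x z r) + r * ((φ z - d z) - (φ x - d x)))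
      (Icc 0 1) 0 := by
    refine isMinOn_iff.2 fun r ⟨hr0, hr1⟩ => ?_
    have hchord := hc.2 (mem_univ x) (mem_univ z) (sub_nonneg.2 hr1) hr0 (sub_add_cancel 1 r)
    have hφ := hmin (lineMap x z r)
    simp only [lineMap_apply_zero, zero_mul, add_zero, smul_eq_mul] at hchord ⊢
    rw [lineMap_apply_module] at hφ ⊢
    linarith
  have hderiv := hline.nonneg_of_hasDerivAt
    ((hasDerivAt_comp_lineMap (by simpa using hd)).add ((hasDerivAt_id 0).mul_const _))
  simp only [lineMap_apply_zero, one_mul] at hderiv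
  linarith

theorem le_add_inner_gradient_add_mul_rpow {g : E → ℝ} {M v : ℝ} (hg : Differentiable ℝ g)
    (hM : 0 ≤ M) (hv : 0 ≤ v)
    (hH : ∀ a b, ‖gradient g a - gradient g b‖ ≤ M * ‖a - b‖ ^ v) (x z : E) :
    g z ≤ g x + ⟪gradient g x, z - x⟫_ℝ + M * ‖z - x‖ ^ (1 + v) := by
  obtain ⟨c, hc, hslope⟩ := exists_hasDerivAt_eq_slope (fun r => g (lineMap x z r))
    (fun r => ⟪gradient g (lineMap x z r), z - x⟫_ℝ) zero_lt_one
    (hg.continuous.comp (lineMap_continuous)).continuousOn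
    (fun r _ => hasDerivAt_comp_lineMap (hg _))
  simp only [lineMap_apply_zero, lineMap_apply_one, sub_zero, div_one] at hslope
  have hdist : ‖lineMap x z c - x‖ ≤ ‖z - x‖ := by
    rw [← vsub_eq_sub, lineMap_vsub_left, norm_smul, Real.norm_of_nonneg hc.1.le, vsub_eq_sub]
    exact mul_le_of_le_one_left (norm_nonneg _) hc.2.le
  suffices g z - g x - ⟪gradient g x, z - x⟫_ℝ ≤ M * ‖z - x‖ ^ (1 + v) by linarith
  calc g z - g x - ⟪gradient g x, z - x⟫_ℝ
      = ⟪gradient g (lineMap x z c) - gradient g x, z - x⟫_ℝ := by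
        rw [inner_sub_left, hslope]
    _ ≤ ‖gradient g (lineMap x z c) - gradient g x‖ * ‖z - x‖ := real_inner_le_norm _ _
    _ ≤ M * ‖z - x‖ ^ v * ‖z - x‖ := by
        gcongr
        exact (hH _ _).trans (by gcongr)
    _ = M * ‖z - x‖ ^ (1 + v) := by
        rw [Real.rpow_one_add' (norm_nonneg _) (by positivity)]; ring

theorem le_add_inner_gradient_add_holderStep_mul_sq {g : E → ℝ} {M v ε : ℝ}
    (hg : Differentiable ℝ g) (hM : 0 < M) (hε : 0 < ε) (hv0 : 0 ≤ v) (hv1 : v ≤ 1)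
    (hH : ∀ a b, ‖gradient g a - gradient g b‖ ≤ M * ‖a - b‖ ^ v) (x z : E) :
    g z ≤ g x + ⟪gradient g x, z - x⟫_ℝ + holderStep M v ε * ‖z - x‖ ^ 2 + ε / 2 := by
  have := le_add_inner_gradient_add_mul_rpow hg hM.le hv0 hH x z
  have := mul_rpow_le_holderStep_mul_sq_add hM hε hv0 hv1 (norm_nonneg (z - x))
  linarith

end Gradient

theorem statement13_general {p : ℕ} (T : ℕ) (hT : 1 ≤ T) (v Mv γ : ℝ)
    (hv0 : 0 ≤ v) (hv1 : v ≤ 1) (hMv : 0 < Mv)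
    (hγ : γ = Mv ^ (2 / (1 + v)) * (T : ℝ) ^ ((1 - v) / 2))
    (d : EuclideanSpace ℝ (Fin p) → ℝ) (hd : Differentiable ℝ d)
    (hdsc : ∀ x y : EuclideanSpace ℝ (Fin p),
      d x + ⟪gradient d x, y - x⟫_ℝ + 1 / 2 * ‖y - x‖ ^ 2 ≤ d y)
    (xi : EuclideanSpace ℝ (Fin p) → EuclideanSpace ℝ (Fin p) → ℝ)
    (hxi : ∀ x y : EuclideanSpace ℝ (Fin p), xi x y = d y - d x - ⟪gradient d x, y - x⟫_ℝ)
    (h : EuclideanSpace ℝ (Fin p) → ℝ) (hh : ConvexOn ℝ Set.univ h)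
    (g : ℕ → EuclideanSpace ℝ (Fin p) → ℝ)
    (hgconv : ∀ t ≤ T, ConvexOn ℝ Set.univ (g t))
    (hgdiff : ∀ t ≤ T, Differentiable ℝ (g t))
    (hHolder : ∀ t ≤ T, ∀ x y : EuclideanSpace ℝ (Fin p),
      ‖gradient (g t) x - gradient (g t) y‖ ≤ Mv * ‖x - y‖ ^ v)
    (x : ℕ → EuclideanSpace ℝ (Fin p))
    (φ : ℕ → EuclideanSpace ℝ (Fin p) → ℝ)
    (hφ0 : ∀ z : EuclideanSpace ℝ (Fin p), φ 0 z = xi (x 0) z)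
    (hφsucc : ∀ t ≤ T, ∀ z : EuclideanSpace ℝ (Fin p),
      φ (t + 1) z = φ t z
        + 1 / (2 * γ) * (g t (x t) + ⟪gradient (g t) (x t), z - x t⟫_ℝ + h z))
    (hxmin : ∀ t ≤ T, ∀ z : EuclideanSpace ℝ (Fin p), φ (t + 1) (x (t + 1)) ≤ φ (t + 1) z)
    (y : ℕ → EuclideanSpace ℝ (Fin p))
    (hymin : ∀ t ≤ T, ∀ z : EuclideanSpace ℝ (Fin p),
      g t (x t) + ⟪gradient (g t) (x t), y t - x t⟫_ℝ + 2 * γ * xi (x t) (y t) + h (y t)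
        ≤ g t (x t) + ⟪gradient (g t) (x t), z - x t⟫_ℝ + 2 * γ * xi (x t) z + h z) :
    ∀ xstar : EuclideanSpace ℝ (Fin p),
      ∑ t ∈ Finset.range (T + 1), ((g t (y t) + h (y t)) - (g t xstar + h xstar))
        ≤ 1 / 2 * (T : ℝ) ^ (-(1 + v) / 2) * (T + 1)
          + 2 * xi (x 0) xstar * Mv ^ (2 / (1 + v)) * (T : ℝ) ^ ((1 - v) / 2) := by
  intro xstar
  set ε := (T : ℝ) ^ (-(1 + v) / 2)
  have hT0 : (0 : ℝ) < T := by exact_mod_cast hT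
  have hε : 0 < ε := by positivity
  have hγ0 : 0 < γ := by rw [hγ]; positivity
  have hγε : γ = holderStep Mv v ε := by rw [hγ, holderStep_rpow_neg hT0 hv0]
  have hxi_ge : ∀ a b, 1 / 2 * ‖b - a‖ ^ 2 ≤ xi a b := fun a b => by
    rw [hxi]; linarith [hdsc a b]
  have hconv0 : ConvexOn ℝ univ fun z => φ 0 z - d z := by
    refine (convexOn_const_add_inner_sub (-d (x 0)) (-gradient d (x 0)) (x 0)).congr
      fun z _ => ?_
    simp only [hφ0, hxi, inner_neg_left]
    ring
  have hprox : ∀ t < T + 1, ∀ z, φ t (x t) + xi (x t) z ≤ φ t z := by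
    intro t ht z
    have hmin : ∀ z, φ t (x t) ≤ φ t z := by
      rcases t with _ | t
      · intro z
        simp only [hφ0, hxi (x 0) (x 0), sub_self, inner_zero_right]
        exact (by positivity : (0 : ℝ) ≤ 1 / 2 * ‖z - x 0‖ ^ 2).trans (hxi_ge (x 0) z)
      · exact hxmin t (by omega)
    rw [hxi]
    exact add_bregman_le_of_isMinOn (convexOn_sub_of_forall_eq_add (by positivity) hh hconv0
      fun s hs => hφsucc s (by omega)) (hd _) hmin z
  have hstep : ∀ t < T + 1, g t (y t) + h (y t) ≤
      (g t (x t) + ⟪gradient (g t) (x t), x (t + 1) - x t⟫_ℝ + h (x (t + 1)))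
        + 2 * γ * xi (x t) (x (t + 1)) + ε / 2 := fun t ht => by
    have hquad := le_add_inner_gradient_add_holderStep_mul_sq (hgdiff t (by omega)) hMv
      hε hv0 hv1 (hHolder t (by omega)) (x t) (y t)
    rw [← hγε] at hquad
    linarith [hymin t (by omega) (x (t + 1)),
      mul_le_mul_of_nonneg_left (hxi_ge (x t) (y t)) hγ0.le]
  have hlin : ∀ t < T + 1, g t (x t) + ⟪gradient (g t) (x t), xstar - x t⟫_ℝ + h xstar
      ≤ g t xstar + h xstar := fun t ht => by
    linarith [(hgconv t (by omega)).add_inner_gradient_le (hgdiff t (by omega) (x t)) xstar]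
  have key := sum_sub_le_of_ftrl (f := fun t z => g t z + h z) (by positivity)
    (fun t ht => hφsucc t (by omega)) hprox hstep hlin (hxmin T le_rfl xstar)
  rw [hφ0, hφ0, hxi (x 0) (x 0), hγ] at key
  simp only [sub_self, inner_zero_right, sub_zero, Nat.cast_add, Nat.cast_one] at key
  linarith

/-- O-UDGM regret bound with `ε = T^{−(1+v)/2}` and fixed step size
`γ = M_v^{2/(1+v)}·T^{(1−v)/2} = γ(M_v, ε)`. `d` is differentiable 1-strongly convex with
Bregman distance `ξ(x,y) = d(y) − d(x) − ⟨∇d(x), y − x⟩`, `x 0` minimizes `d`, `h` is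
convex, each `g t` is convex differentiable with Hölder continuous gradient of exponent
`v` and constant at most `M_v`; `φ_0(x) = ξ(x_0, x)`,
`φ_{t+1}(x) = φ_t(x) + (1/(2γ))[g_t(x_t) + ⟨∇g_t(x_t), x − x_t⟩ + h(x)]`, `x (t+1)`
minimizes `φ_{t+1}` and `y t` minimizes
`x ↦ g_t(x_t) + ⟨∇g_t(x_t), x − x_t⟩ + 2γ·ξ(x_t, x) + h(x)`. Then the regret is bounded by
`(1/2)·T^{−(1+v)/2}·(T+1) + 2·ξ(x_0,x*)·M_v^{2/(1+v)}·T^{(1−v)/2}`, i.e. `O(T^{(1−v)/2})`. -/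
theorem statement13 {p : ℕ} (T : ℕ) (hT : 1 ≤ T) (ε v Mv γ : ℝ)
    (hv0 : 0 ≤ v) (hv1 : v ≤ 1) (hMv : 0 < Mv)
    (hε : ε = (T : ℝ) ^ (-(1 + v) / 2))
    (hγ : γ = Mv ^ (2 / (1 + v)) * (T : ℝ) ^ ((1 - v) / 2))
    (d : EuclideanSpace ℝ (Fin p) → ℝ) (hd : Differentiable ℝ d)
    (hdsc : ∀ x y : EuclideanSpace ℝ (Fin p),
      d x + ⟪gradient d x, y - x⟫_ℝ + 1 / 2 * ‖y - x‖ ^ 2 ≤ d y)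
    (xi : EuclideanSpace ℝ (Fin p) → EuclideanSpace ℝ (Fin p) → ℝ)
    (hxi : ∀ x y : EuclideanSpace ℝ (Fin p), xi x y = d y - d x - ⟪gradient d x, y - x⟫_ℝ)
    (h : EuclideanSpace ℝ (Fin p) → ℝ) (hh : ConvexOn ℝ Set.univ h)
    (g : ℕ → EuclideanSpace ℝ (Fin p) → ℝ)
    (hgconv : ∀ t ≤ T, ConvexOn ℝ Set.univ (g t))
    (hgdiff : ∀ t ≤ T, Differentiable ℝ (g t))
    (hHolder : ∀ t ≤ T, ∀ x y : EuclideanSpace ℝ (Fin p),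
      ‖gradient (g t) x - gradient (g t) y‖ ≤ Mv * ‖x - y‖ ^ v)
    (x : ℕ → EuclideanSpace ℝ (Fin p))
    (hx0 : ∀ z : EuclideanSpace ℝ (Fin p), d (x 0) ≤ d z)
    (φ : ℕ → EuclideanSpace ℝ (Fin p) → ℝ)
    (hφ0 : ∀ z : EuclideanSpace ℝ (Fin p), φ 0 z = xi (x 0) z)
    (hφsucc : ∀ t ≤ T, ∀ z : EuclideanSpace ℝ (Fin p),
      φ (t + 1) z = φ t z
        + 1 / (2 * γ) * (g t (x t) + ⟪gradient (g t) (x t), z - x t⟫_ℝ + h z))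
    (hxmin : ∀ t ≤ T, ∀ z : EuclideanSpace ℝ (Fin p), φ (t + 1) (x (t + 1)) ≤ φ (t + 1) z)
    (y : ℕ → EuclideanSpace ℝ (Fin p))
    (hymin : ∀ t ≤ T, ∀ z : EuclideanSpace ℝ (Fin p),
      g t (x t) + ⟪gradient (g t) (x t), y t - x t⟫_ℝ + 2 * γ * xi (x t) (y t) + h (y t)
        ≤ g t (x t) + ⟪gradient (g t) (x t), z - x t⟫_ℝ + 2 * γ * xi (x t) z + h z) :
    ∀ xstar : EuclideanSpace ℝ (Fin p),
      ∑ t ∈ Finset.range (T + 1), ((g t (y t) + h (y t)) - (g t xstar + h xstar))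
        ≤ 1 / 2 * (T : ℝ) ^ (-(1 + v) / 2) * (T + 1)
          + 2 * xi (x 0) xstar * Mv ^ (2 / (1 + v)) * (T : ℝ) ^ ((1 - v) / 2) :=
  statement13_general T hT v Mv γ hv0 hv1 hMv hγ d hd hdsc xi hxi h hh g hgconv hgdiff hHolder x φ
    hφ0 hφsucc hxmin y hymin
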